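/- Let each f_i be differentiable, convex and L-smooth, fix γ > 0 and b ≥ 2, and let the matrices satisfy Assumption (A7). Let {(X^k, X̲^k, Y̲^k)} be generated by: X^k = B·X̲^k; X̲^{k+1} = D·X^k − γ(∇f(X^k) + Y̲^k); Y̲^{k+1} = Y̲^k + (1/γ)·C·X̲^{k+1}, with Y̲^0 = 0. Then for every k ≥ 0, every X = 1·xᵀ with x ∈ ℝ^d, and every Y ∈ ℝ^{m×d} with 1ᵀY = 0: φ(X^{k+1}, Y) ≤ φ(X, Y) − (1/γ)·‖X̲^{k+1}‖²_{B−BC−AB} − (1/γ)·⟨X^{k+1}−X^k, X^{k+1}−X⟩_D − γ·⟨Y̲^{k+1}−Y, Y̲^{k+1}−Y̲^k⟩_{B'} + (L/2)·‖X^{k+1}−X^k‖², where A = B·D and B' = (C + bJ)^{−1}·B. -/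

import Mathlib

noncomputable section

open Matrix Finset

/-- `ℝ^d` as a Euclidean (inner-product) space. -/
abbrev Vec (d : ℕ) := EuclideanSpace ℝ (Fin d)

/-- Interpret a plain tuple as a Euclidean vector. -/
def toVec {d : ℕ} (x : Fin d → ℝ) : Vec d := (WithLp.equiv 2 (Fin d → ℝ)).symm x

/-- Interpret a Euclidean vector as a plain tuple. -/
def ofVec {d : ℕ} (x : Vec d) : Fin d → ℝ := (WithLp.equiv 2 (Fin d → ℝ)) x

/-- The matrix `1 · xᵀ` whose rows all equal `x`. -/
def oneOuter (m : ℕ) {d : ℕ} (x : Vec d) : Matrix (Fin m) (Fin d) ℝ :=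
  Matrix.of fun _ j => ofVec x j

/-- `f(X) = ∑ i, f_i(x_i)`, where `x_i` is the `i`-th row of `X`. -/
def fMat {m d : ℕ} (f : Fin m → Vec d → ℝ) (X : Matrix (Fin m) (Fin d) ℝ) : ℝ :=
  ∑ i, f i (toVec (X i))

/-- `g(X) = ∑ i, G(x_i)`. -/
def gMat {m d : ℕ} (G : Vec d → ℝ) (X : Matrix (Fin m) (Fin d) ℝ) : ℝ :=
  ∑ i, G (toVec (X i))

/-- `∇f(X)`: the matrix whose `i`-th row is `∇f_i(x_i)`. -/
def gradMat {m d : ℕ} (gf : Fin m → Vec d → Vec d) (X : Matrix (Fin m) (Fin d) ℝ) :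
    Matrix (Fin m) (Fin d) ℝ :=
  Matrix.of fun i => ofVec (gf i (toVec (X i)))

/-- `F(x) = (1/m) ∑ i, f_i(x)`. -/
def Fbar {m d : ℕ} (f : Fin m → Vec d → ℝ) (x : Vec d) : ℝ :=
  (1 / (m : ℝ)) * ∑ i, f i x

/-- `gf` is the gradient field of `f`. -/
def IsGradient {d : ℕ} (f : Vec d → ℝ) (gf : Vec d → Vec d) : Prop :=
  ∀ x, HasGradientAt f (gf x) x

/-- `L`-smoothness: the gradient field is `L`-Lipschitz. -/
def LSmooth {d : ℕ} (L : ℝ) (gf : Vec d → Vec d) : Prop :=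
  ∀ x y, ‖gf x - gf y‖ ≤ L * ‖x - y‖

/-- `ξ` is a subgradient of `G` at `x`. -/
def IsSubgradientAt {d : ℕ} (G : Vec d → ℝ) (ξ x : Vec d) : Prop :=
  ∀ y, G x + (inner ℝ ξ (y - x) : ℝ) ≤ G y

/-- `p` is the proximal point `prox_{γ G}(z)`, i.e. a minimizer of
`y ↦ G(y) + ‖y − z‖²/(2γ)`. -/
def IsProx {d : ℕ} (G : Vec d → ℝ) (γ : ℝ) (z p : Vec d) : Prop :=
  ∀ y, G p + ‖p - z‖ ^ 2 / (2 * γ) ≤ G y + ‖y - z‖ ^ 2 / (2 * γ)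

/-- Apply a map `P : ℝ^d → ℝ^d` rowwise to a matrix (used for `prox_{γ g}`). -/
def rowsMap {m d : ℕ} (P : Vec d → Vec d) (Z : Matrix (Fin m) (Fin d) ℝ) :
    Matrix (Fin m) (Fin d) ℝ :=
  Matrix.of fun i => ofVec (P (toVec (Z i)))

/-- Frobenius inner product `⟨X, Y⟩ = trace(Xᵀ Y)`. -/
def frInner {n p : Type*} [Fintype n] [Fintype p] (X Y : Matrix n p ℝ) : ℝ :=
  Matrix.trace (Xᵀ * Y)

/-- Squared Frobenius norm. -/
def froSq {n p : Type*} [Fintype n] [Fintype p] (X : Matrix n p ℝ) : ℝ := frInner X X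

/-- Frobenius norm. -/
def fro {n p : Type*} [Fintype n] [Fintype p] (X : Matrix n p ℝ) : ℝ := Real.sqrt (froSq X)

/-- Weighted squared norm `‖X‖²_M = trace(Xᵀ M X)`. -/
def mnormSq {n p : Type*} [Fintype n] [Fintype p] (M : Matrix n n ℝ) (X : Matrix n p ℝ) : ℝ :=
  frInner X (M * X)

/-- Weighted inner product `⟨X, Y⟩_M = trace(Xᵀ M Y)`. -/
def minnerM {n p : Type*} [Fintype n] [Fintype p] (M : Matrix n n ℝ) (X Y : Matrix n p ℝ) : ℝ :=
  frInner X (M * Y)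

/-- The set of eigenvalues of a matrix. -/
def eigs {m : ℕ} (M : Matrix (Fin m) (Fin m) ℝ) : Set ℝ :=
  {r | ∃ v : Fin m → ℝ, v ≠ 0 ∧ M *ᵥ v = r • v}

/-- Largest eigenvalue. -/
def lmax {m : ℕ} (M : Matrix (Fin m) (Fin m) ℝ) : ℝ := sSup (eigs M)

/-- Smallest eigenvalue. -/
def lmin {m : ℕ} (M : Matrix (Fin m) (Fin m) ℝ) : ℝ := sInf (eigs M)

/-- Second smallest eigenvalue of a symmetric matrix whose null space is `span{1}`:
the smallest eigenvalue attained on the orthogonal complement of `1`. -/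
def lam2 {m : ℕ} (M : Matrix (Fin m) (Fin m) ℝ) : ℝ :=
  sInf {r | ∃ v : Fin m → ℝ, v ≠ 0 ∧ (∑ i, v i) = 0 ∧ M *ᵥ v = r • v}

/-- Spectral radius. -/
def specRad {m : ℕ} (M : Matrix (Fin m) (Fin m) ℝ) : ℝ := sSup ((fun r => |r|) '' eigs M)

/-- The null space of `C` is exactly `span{1}`. -/
def NullSpanOnes {m : ℕ} (C : Matrix (Fin m) (Fin m) ℝ) : Prop :=
  ∀ v : Fin m → ℝ, C *ᵥ v = 0 ↔ ∃ c : ℝ, v = fun _ => c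

/-- The positive semidefinite square root of a positive semidefinite matrix
(the definition `Matrix.PosSemidef.sqrt` of the older Mathlib, no longer present). -/
def Matrix.PosSemidef.sqrt {n : Type*} [Fintype n] [DecidableEq n]
    {A : Matrix n n ℝ} (hA : A.PosSemidef) : Matrix n n ℝ :=
  hA.1.eigenvectorUnitary.1 * diagonal ((↑) ∘ (√·) ∘ hA.1.eigenvalues) *
  (star hA.1.eigenvectorUnitary : Matrix n n ℝ)

/-- The averaging matrix `J = 1·1ᵀ/m`. -/
def Jmat (m : ℕ) : Matrix (Fin m) (Fin m) ℝ := Matrix.of fun _ _ => 1 / (m : ℝ)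

/-- `φ(X,Y) = f(X) + ⟨Y, X⟩`. -/
def phiF {m d : ℕ} (f : Fin m → Vec d → ℝ) (X Y : Matrix (Fin m) (Fin d) ℝ) : ℝ :=
  fMat f X + frInner Y X

/-! ### Auxiliary lemmas -/

lemma myLineDeriv {d : ℕ} (f : Vec d → ℝ) (g : Vec d → Vec d) (hg : ∀ x, HasGradientAt f (g x) x)
    (x u : Vec d) (t : ℝ) :
    HasDerivAt (fun s : ℝ => f (x + s • u)) (inner ℝ (g (x + t • u)) u : ℝ) t := by
  have hline : HasDerivAt (fun s : ℝ => x + s • u) u t := by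
    simpa using ((hasDerivAt_id t).smul_const u).const_add x
  have h := (hg (x + t • u)).hasFDerivAt.comp_hasDerivAt t hline
  simp only [InnerProductSpace.toDual_apply_apply] at h
  exact h

lemma convex_grad_ineq {d : ℕ} (f : Vec d → ℝ) (g : Vec d → Vec d)
    (hg : ∀ x, HasGradientAt f (g x) x) (hconv : ConvexOn ℝ Set.univ f) (x y : Vec d) :
    f x + (inner ℝ (g x) (y - x) : ℝ) ≤ f y := by
  set u := y - x with hu
  set φ : ℝ → ℝ := fun s => f (x + s • u) with hφ
  have hder : HasDerivAt φ (inner ℝ (g x) u : ℝ) 0 := by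
    simpa using myLineDeriv f g hg x u 0
  have hslope : ∀ t ∈ Set.Ioc (0:ℝ) 1, slope φ 0 t ≤ f y - f x := by
    intro t ht
    have hcvx := hconv.2 (Set.mem_univ x) (Set.mem_univ y) (by linarith [ht.2] : (0:ℝ) ≤ 1 - t)
      (le_of_lt ht.1) (by ring)
    have hpt : x + t • u = (1 - t) • x + t • y := by
      rw [hu, smul_sub, sub_smul, one_smul]; abel
    have h1 : φ t ≤ (1 - t) * f x + t * f y := by
      rw [hφ]; simpa [hpt] using hcvx
    have h0 : φ 0 = f x := by simp [hφ]
    rw [slope_def_field, sub_zero, div_le_iff₀ ht.1, h0]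
    nlinarith [h1]
  have htend : Filter.Tendsto (slope φ 0) (nhdsWithin 0 (Set.Ioi 0)) (nhds (inner ℝ (g x) u : ℝ)) :=
    (hasDerivAt_iff_tendsto_slope.mp hder).mono_left
      (nhdsWithin_mono 0 (fun t ht => ne_of_gt ht))
  have hle : (inner ℝ (g x) u : ℝ) ≤ f y - f x := by
    refine le_of_tendsto htend ?_
    filter_upwards [Ioc_mem_nhdsGT_of_mem (Set.mem_Ico.mpr ⟨le_refl 0, one_pos⟩)] with t ht
    exact hslope t ht
  linarith

lemma descent_lemma {d : ℕ} (f : Vec d → ℝ) (g : Vec d → Vec d)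
    (hg : ∀ x, HasGradientAt f (g x) x) (L : ℝ) (hL : 0 ≤ L)
    (hlip : ∀ a b, ‖g a - g b‖ ≤ L * ‖a - b‖) (x y : Vec d) :
    f y ≤ f x + (inner ℝ (g x) (y - x) : ℝ) + L / 2 * ‖y - x‖ ^ 2 := by
  set u := y - x with hu
  set D : ℝ → ℝ := fun t => (inner ℝ (g (x + t • u)) u : ℝ) with hD
  have hder : ∀ t ∈ Set.uIcc (0:ℝ) 1, HasDerivAt (fun s : ℝ => f (x + s • u)) (D t) t :=
    fun t _ => myLineDeriv f g hg x u t
  have hcontg : Continuous fun t : ℝ => g (x + t • u) := by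
    have : LipschitzWith ⟨L * ‖u‖, by positivity⟩ (fun t : ℝ => g (x + t • u)) := by
      apply LipschitzWith.of_dist_le_mul
      intro s t
      have h1 : dist (g (x + s • u)) (g (x + t • u)) ≤ L * ‖(s - t) • u‖ := by
        rw [dist_eq_norm]
        calc ‖g (x + s • u) - g (x + t • u)‖ ≤ L * ‖(x + s • u) - (x + t • u)‖ := hlip _ _
          _ = L * ‖(s - t) • u‖ := by rw [add_sub_add_left_eq_sub, ← sub_smul]
      calc dist (g (x + s • u)) (g (x + t • u)) ≤ L * (|s - t| * ‖u‖) := by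
            simpa [norm_smul] using h1
        _ = (L * ‖u‖) * dist s t := by rw [Real.dist_eq]; ring
    exact this.continuous
  have hcontD : Continuous D := (hcontg.inner continuous_const)
  have hftc : ∫ t in (0:ℝ)..1, D t = f y - f x := by
    have := intervalIntegral.integral_eq_sub_of_hasDerivAt hder
      (hcontD.intervalIntegrable 0 1)
    simpa [hu] using this
  have hbound : ∀ t ∈ Set.Icc (0:ℝ) 1, D t ≤ D 0 + L * ‖u‖ ^ 2 * t := by
    intro t ht
    have h1 : D t - D 0 = (inner ℝ (g (x + t • u) - g x) u : ℝ) := by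
      rw [hD]; simp [inner_sub_left]
    have h2 : (inner ℝ (g (x + t • u) - g x) u : ℝ) ≤ ‖g (x + t • u) - g x‖ * ‖u‖ :=
      real_inner_le_norm _ _
    have h3 : ‖g (x + t • u) - g x‖ ≤ L * (t * ‖u‖) := by
      have := hlip (x + t • u) x
      simpa [norm_smul, abs_of_nonneg ht.1] using this
    nlinarith [norm_nonneg u, ht.1]
  have hcont2 : Continuous fun t : ℝ => D 0 + L * ‖u‖ ^ 2 * t := by fun_prop
  have hint : ∫ t in (0:ℝ)..1, D t ≤ ∫ t in (0:ℝ)..1, (D 0 + L * ‖u‖ ^ 2 * t) :=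
    intervalIntegral.integral_mono_on zero_le_one (hcontD.intervalIntegrable 0 1)
      (hcont2.intervalIntegrable 0 1) hbound
  have hval : ∫ t in (0:ℝ)..1, (D 0 + L * ‖u‖ ^ 2 * t) = D 0 + L / 2 * ‖u‖ ^ 2 := by
    rw [intervalIntegral.integral_add intervalIntegrable_const
      (((by fun_prop : Continuous fun t : ℝ => L * ‖u‖ ^ 2 * t)).intervalIntegrable 0 1)]
    rw [intervalIntegral.integral_const_mul]
    simp [integral_id]
    ring
  have hD0 : D 0 = (inner ℝ (g x) u : ℝ) := by simp [hD]
  linarith [hftc ▸ (hval ▸ hint)]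

section toolkit
variable {n p : Type*} [Fintype n] [Fintype p] (X Y Z : Matrix n p ℝ) (M : Matrix n n ℝ) (r : ℝ)

lemma frInner_addl : frInner (X + Y) Z = frInner X Z + frInner Y Z := by
  simp [frInner, Matrix.transpose_add, Matrix.add_mul]
lemma frInner_subl : frInner (X - Y) Z = frInner X Z - frInner Y Z := by
  simp [frInner, Matrix.transpose_sub, Matrix.sub_mul]
lemma frInner_smull : frInner (r • X) Z = r * frInner X Z := by
  simp [frInner, Matrix.transpose_smul, Matrix.smul_mul]
lemma frInner_addr : frInner X (Y + Z) = frInner X Y + frInner X Z := by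
  simp [frInner, Matrix.mul_add]
lemma frInner_subr : frInner X (Y - Z) = frInner X Y - frInner X Z := by
  simp [frInner, Matrix.mul_sub]
lemma frInner_smulr : frInner X (r • Y) = r * frInner X Y := by
  simp [frInner, Matrix.mul_smul]
lemma frInner_mull : frInner (M * X) Y = frInner X (Mᵀ * Y) := by
  rw [frInner, frInner, Matrix.transpose_mul, Matrix.mul_assoc]
lemma frInner_negr : frInner X (-Y) = - frInner X Y := by
  simp [frInner, Matrix.mul_neg]
lemma frInner_entries : frInner X Y = ∑ j, ∑ i, X i j * Y i j := by
  simp [frInner, Matrix.trace, Matrix.diag, Matrix.mul_apply]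

end toolkit

lemma frInner_rows {m d : ℕ} (U V : Matrix (Fin m) (Fin d) ℝ) :
    frInner U V = ∑ i, (inner ℝ (toVec (U i)) (toVec (V i)) : ℝ) := by
  rw [frInner_entries, Finset.sum_comm]
  refine Finset.sum_congr rfl fun i _ => ?_
  simp [PiLp.inner_apply, toVec, RCLike.inner_apply]
  exact Finset.sum_congr rfl fun _ _ => mul_comm _ _

lemma colsum_mul {m d : ℕ} (M : Matrix (Fin m) (Fin m) ℝ) (W : Matrix (Fin m) (Fin d) ℝ)
    (j : Fin d) : ∑ i, (M * W) i j = ∑ l, (∑ i, M i l) * W l j := by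
  simp only [Matrix.mul_apply]
  rw [Finset.sum_comm]
  simp [Finset.sum_mul]

lemma frInner_oneOuter_zero {m d : ℕ} (Z : Matrix (Fin m) (Fin d) ℝ) (x : Vec d)
    (hZ : ∀ j, ∑ i, Z i j = 0) : frInner Z (oneOuter m x) = 0 := by
  rw [frInner_entries]
  apply Finset.sum_eq_zero
  intro j _
  have : ∑ i, Z i j * ofVec x j = (∑ i, Z i j) * ofVec x j := by rw [Finset.sum_mul]
  simp [oneOuter, this, hZ j]

lemma frInner_Jmul_zero {m d : ℕ} (Z W : Matrix (Fin m) (Fin d) ℝ)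
    (hZ : ∀ j, ∑ i, Z i j = 0) : frInner Z (Jmat m * W) = 0 := by
  rw [frInner_entries]
  apply Finset.sum_eq_zero
  intro j _
  have h1 : ∀ i : Fin m, (Jmat m * W) i j = (1 / (m:ℝ)) * ∑ l, W l j := by
    intro i; simp [Matrix.mul_apply, Jmat, Finset.mul_sum]
  calc ∑ i, Z i j * (Jmat m * W) i j = ∑ i, Z i j * ((1 / (m:ℝ)) * ∑ l, W l j) := by
        simp_rw [h1]
    _ = (∑ i, Z i j) * ((1 / (m:ℝ)) * ∑ l, W l j) := by rw [Finset.sum_mul]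
    _ = 0 := by rw [hZ j, zero_mul]

lemma C_rowsum_zero {m : ℕ} (C : Matrix (Fin m) (Fin m) ℝ) (hCnull : NullSpanOnes C)
    (i : Fin m) : ∑ l, C i l = 0 := by
  have h1 : C *ᵥ (fun _ => (1:ℝ)) = 0 := (hCnull (fun _ => 1)).mpr ⟨1, rfl⟩
  have := congrFun h1 i
  simpa [Matrix.mulVec, dotProduct] using this

lemma C_colsum_zero {m : ℕ} (C : Matrix (Fin m) (Fin m) ℝ) (hCs : Cᵀ = C)
    (hCnull : NullSpanOnes C) (l : Fin m) : ∑ i, C i l = 0 := by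
  have h := C_rowsum_zero C hCnull l
  calc ∑ i, C i l = ∑ i, C l i := by
        refine Finset.sum_congr rfl fun i _ => ?_
        conv_lhs => rw [← hCs]
        rfl
    _ = 0 := h

lemma CJ_zero {m : ℕ} (C : Matrix (Fin m) (Fin m) ℝ) (hCnull : NullSpanOnes C) :
    C * Jmat m = 0 := by
  ext i j
  simp only [Matrix.mul_apply, Jmat, Matrix.of_apply, Matrix.zero_apply]
  rw [← Finset.sum_mul, C_rowsum_zero C hCnull i, zero_mul]

lemma JJ {m : ℕ} (hm : 0 < m) : Jmat m * Jmat m = Jmat m := by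
  ext i j
  simp only [Matrix.mul_apply, Jmat, Matrix.of_apply]
  rw [Finset.sum_const, Finset.card_univ, Fintype.card_fin]
  have : (m:ℝ) ≠ 0 := Nat.cast_ne_zero.mpr hm.ne'
  rw [nsmul_eq_mul]
  field_simp

lemma Jv_dot {m : ℕ} (v : Fin m → ℝ) :
    dotProduct (star v) ((Jmat m) *ᵥ v) = (∑ i, v i)^2 / m := by
  simp only [Matrix.mulVec, dotProduct, Jmat, Matrix.of_apply, star_trivial]
  have h1 : ∀ i : Fin m, ∑ l, (1:ℝ) / m * v l = (∑ l, v l) / m := by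
    intro i; rw [Finset.sum_div]; exact Finset.sum_congr rfl fun l _ => by ring
  calc ∑ i, v i * ∑ l, (1:ℝ)/m * v l = ∑ i, v i * ((∑ l, v l) / m) := by
        refine Finset.sum_congr rfl fun i _ => by rw [h1 i]
    _ = (∑ i, v i) * ((∑ l, v l)/m) := by rw [← Finset.sum_mul]
    _ = (∑ i, v i)^2 / m := by ring

lemma CbJ_posdef {m : ℕ} (hm : 0 < m) (b : ℝ) (hb : 0 < b) (C : Matrix (Fin m) (Fin m) ℝ)
    (hCpsd : C.PosSemidef) (hCnull : NullSpanOnes C) : (C + b • Jmat m).PosDef := by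
  refine Matrix.PosDef.of_dotProduct_mulVec_pos ?_ ?_
  · have hC : Cᴴ = C := hCpsd.1
    have hJ : (Jmat m)ᴴ = Jmat m := by
      ext i j; simp [Jmat, Matrix.conjTranspose_apply]
    show (C + b • Jmat m)ᴴ = _
    rw [conjTranspose_add, hC, conjTranspose_smul, hJ]
    simp
  · intro v hv
    have hsplit : dotProduct (star v) ((C + b • Jmat m) *ᵥ v)
        = dotProduct (star v) (C *ᵥ v) + b * ((∑ i, v i)^2 / m) := by
      rw [Matrix.add_mulVec, dotProduct_add, Matrix.smul_mulVec, dotProduct_smul,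
        Jv_dot]
      simp
    rw [hsplit]
    have hCv : 0 ≤ dotProduct (star v) (C *ᵥ v) := hCpsd.dotProduct_mulVec_nonneg v
    rcases eq_or_lt_of_le hCv with heq | hlt
    · have hCv0 : C *ᵥ v = 0 := (hCpsd.dotProduct_mulVec_zero_iff v).mp heq.symm
      obtain ⟨c, rfl⟩ := (hCnull v).mp hCv0
      have hc : c ≠ 0 := by
        intro h; apply hv; funext i; simp [h]
      have hsum : ∑ i : Fin m, c = m * c := by
        rw [Finset.sum_const, Finset.card_univ, Fintype.card_fin]; ring
      rw [← heq, hsum]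
      have : (0:ℝ) < (m*c)^2 / m := by
        apply div_pos (by positivity)
        exact_mod_cast hm
      positivity
    · have : 0 ≤ b * ((∑ i, v i)^2/m) := by positivity
      linarith

lemma CbJ_inv_C {m : ℕ} (hm : 0 < m) (b : ℝ) (hb : 0 < b) (C : Matrix (Fin m) (Fin m) ℝ)
    (hCpsd : C.PosSemidef) (hCnull : NullSpanOnes C) :
    (C + b • Jmat m)⁻¹ * C = 1 - Jmat m := by
  have hpd := CbJ_posdef hm b hb C hCpsd hCnull
  have hdet : IsUnit (C + b • Jmat m).det := (Matrix.isUnit_iff_isUnit_det _).mp hpd.isUnit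
  have hfact : (C + b • Jmat m) * (1 - Jmat m) = C := by
    rw [Matrix.mul_sub, Matrix.mul_one, Matrix.add_mul, CJ_zero C hCnull, Matrix.smul_mul,
      JJ hm]
    abel
  calc (C + b • Jmat m)⁻¹ * C = (C + b • Jmat m)⁻¹ * ((C + b • Jmat m) * (1 - Jmat m)) := by
        rw [hfact]
    _ = ((C + b • Jmat m)⁻¹ * (C + b • Jmat m)) * (1 - Jmat m) := by rw [Matrix.mul_assoc]
    _ = 1 - Jmat m := by rw [Matrix.nonsing_inv_mul _ hdet, Matrix.one_mul]

/-- Lemma 6, basic inequality I, smooth case: under Assumption (A7),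
for every `k`, every consensual `X = 1·xᵀ` and every `Y` with `1ᵀY = 0`, the iterates
satisfy the stated bound on `φ(X^{k+1}, Y)`. -/
theorem statement_11
    (m d : ℕ) (hm : 0 < m) (hd : 0 < d) (L γ b : ℝ) (hγ : 0 < γ) (hb : 2 ≤ b)
    (f : Fin m → Vec d → ℝ) (gf : Fin m → Vec d → Vec d)
    (hgrad : ∀ i, IsGradient (f i) (gf i))
    (hconv : ∀ i, ConvexOn ℝ Set.univ (f i))
    (hsmooth : ∀ i, LSmooth L (gf i))
    (A B C D : Matrix (Fin m) (Fin m) ℝ)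
    -- Assumption (A7)
    (hA : A = B * D) (hBpsd : B.PosSemidef) (hDs : D.IsSymm) (hDpd : D.PosDef)
    (hD1 : D *ᵥ (fun _ => (1 : ℝ)) = fun _ => 1) (hB1 : ∀ j, ∑ i, B i j = 1)
    (hCpsd : C.PosSemidef) (hCnull : NullSpanOnes C) (hBC : B * C = C * B)
    (hkey : (1 - (1 / 2 : ℝ) • C - hBpsd.sqrt * D * hBpsd.sqrt).PosSemidef)
    -- the algorithm
    (X Xu Yu : ℕ → Matrix (Fin m) (Fin d) ℝ)
    (hXB : ∀ k, X k = B * Xu k)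
    (hXu : ∀ k, Xu (k + 1) = D * X k - γ • (gradMat gf (X k) + Yu k))
    (hYu : ∀ k, Yu (k + 1) = Yu k + (1 / γ) • (C * Xu (k + 1)))
    (hYu0 : Yu 0 = 0) :
    ∀ (k : ℕ) (x : Vec d) (Y : Matrix (Fin m) (Fin d) ℝ), (∀ j, ∑ i, Y i j = 0) →
      phiF f (X (k + 1)) Y ≤
        phiF f (oneOuter m x) Y
          - (1 / γ) * mnormSq (B - B * C - A * B) (Xu (k + 1))
          - (1 / γ) * minnerM D (X (k + 1) - X k) (X (k + 1) - oneOuter m x)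
          - γ * minnerM ((C + b • Jmat m)⁻¹ * B) (Yu (k + 1) - Y) (Yu (k + 1) - Yu k)
          + (L / 2) * froSq (X (k + 1) - X k) := by
  intro k x Y hY
  have hb0 : (0:ℝ) < b := by linarith
  have hγne : γ ≠ 0 := ne_of_gt hγ
  -- symmetry facts
  have hBt : Bᵀ = B := by
    ext i j
    rw [Matrix.transpose_apply]
    have h := congrFun (congrFun hBpsd.1 i) j
    simpa using h
  have hCt : Cᵀ = C := by
    ext i j
    rw [Matrix.transpose_apply]
    have h := congrFun (congrFun hCpsd.1 i) j
    simpa using h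
  have hDt : Dᵀ = D := hDs
  -- column sums
  have hDcol : ∀ t, ∑ i, D i t = 1 := by
    intro t
    have h1 : ∑ l, D t l = 1 := by
      have := congrFun hD1 t
      simpa [Matrix.mulVec, dotProduct] using this
    calc ∑ i, D i t = ∑ i, D t i := by
          refine Finset.sum_congr rfl fun i _ => ?_
          conv_lhs => rw [← hDt]
          rfl
      _ = 1 := h1
  have hCcol : ∀ l, ∑ i, C i l = 0 := C_colsum_zero C hCt hCnull
  have hJB : Jmat m * B = Jmat m := by
    ext i j
    simp only [Matrix.mul_apply, Jmat, Matrix.of_apply]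
    rw [← Finset.mul_sum, hB1 j, mul_one]
  have hMcol : ∀ l, ∑ i, (D * B - 1 + C) i l = 0 := by
    intro l
    have h1 : ∑ i, (D * B) i l = 1 := by
      rw [colsum_mul]
      calc ∑ t, (∑ i, D i t) * B t l = ∑ t, B t l := by
            refine Finset.sum_congr rfl fun t _ => by rw [hDcol t, one_mul]
        _ = 1 := hB1 l
    have h2 : ∑ i, (1 : Matrix (Fin m) (Fin m) ℝ) i l = 1 := by
      simp [Matrix.one_apply]
    calc ∑ i, (D * B - 1 + C) i l
        = ∑ i, ((D * B) i l - (1 : Matrix (Fin m) (Fin m) ℝ) i l + C i l) := rfl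
      _ = (∑ i, (D * B) i l) - (∑ i, (1 : Matrix (Fin m) (Fin m) ℝ) i l) + ∑ i, C i l := by
          rw [Finset.sum_add_distrib, Finset.sum_sub_distrib]
      _ = 0 := by rw [h1, h2, hCcol l]; ring
  -- column sums of Yu are zero
  have hYcol : ∀ (n : ℕ) (j : Fin d), ∑ i, Yu n i j = 0 := by
    intro n
    induction n with
    | zero => intro j; simp [hYu0]
    | succ n ih =>
      intro j
      rw [hYu n]
      have : ∀ i : Fin m, (Yu n + (1/γ) • (C * Xu (n+1))) i j
          = Yu n i j + (1/γ) * (C * Xu (n+1)) i j := by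
        intro i; simp
      simp_rw [this]
      rw [Finset.sum_add_distrib, ih j, ← Finset.mul_sum, colsum_mul]
      simp_rw [hCcol]
      simp
  have hPcolY : ∀ j, ∑ i, (Yu (k+1) - Y) i j = 0 := by
    intro j
    have : ∀ i : Fin m, (Yu (k+1) - Y) i j = Yu (k+1) i j - Y i j := fun i => rfl
    simp_rw [this]
    rw [Finset.sum_sub_distrib, hYcol (k+1) j, hY j, sub_zero]
  -- gradient expression
  have hG : gradMat gf (X k) = (1/γ) • (D * X k - Xu (k+1)) - Yu k := by
    have h2 : γ • (gradMat gf (X k) + Yu k) = D * X k - Xu (k+1) := by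
      rw [hXu k]; abel
    have h3 : gradMat gf (X k) + Yu k = (1/γ) • (D * X k - Xu (k+1)) := by
      rw [← h2, smul_smul, one_div, inv_mul_cancel₀ hγne, one_smul]
    exact eq_sub_of_add_eq h3
  have hYpYk : Yu (k+1) - Yu k = (1/γ) • (C * Xu (k+1)) := by
    rw [hYu k, add_sub_cancel_left]
  set P := X (k+1) - oneOuter m x with hP
  -- the atoms
  set a1 := frInner (D * X k) P with ha1
  set a2 := frInner (Xu (k+1)) P with ha2
  set a3 := frInner (Yu k) P with ha3
  set a4 := frInner (D * X (k+1)) P with ha4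
  set a5 := frInner (C * Xu (k+1)) P with ha5
  set a6 := frInner (Yu (k+1)) P with ha6
  set a7 := frInner Y P with ha7
  have e1 : frInner (gradMat gf (X k)) P = (1/γ) * a1 - (1/γ) * a2 - a3 := by
    rw [hG, frInner_subl, frInner_smull, frInner_subl, ha1, ha2, ha3]; ring
  have e2 : minnerM D (X (k+1) - X k) P = a4 - a1 := by
    have h1 : frInner (D * (X (k+1) - X k)) P = frInner (X (k+1) - X k) (Dᵀ * P) :=
      frInner_mull _ _ _
    rw [hDt] at h1
    show frInner (X (k+1) - X k) (D * P) = a4 - a1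
    rw [← h1, Matrix.mul_sub, frInner_subl, ha4, ha1]
  have e3 : γ * minnerM ((C + b • Jmat m)⁻¹ * B) (Yu (k+1) - Y) (Yu (k+1) - Yu k)
      = a6 - a7 := by
    have hMB : ((C + b • Jmat m)⁻¹ * B) * C = B - Jmat m := by
      calc ((C + b • Jmat m)⁻¹ * B) * C = (C + b • Jmat m)⁻¹ * (B * C) := by
            rw [Matrix.mul_assoc]
        _ = (C + b • Jmat m)⁻¹ * (C * B) := by rw [hBC]
        _ = ((C + b • Jmat m)⁻¹ * C) * B := by rw [Matrix.mul_assoc]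
        _ = (1 - Jmat m) * B := by rw [CbJ_inv_C hm b hb0 C hCpsd hCnull]
        _ = B - Jmat m * B := by rw [Matrix.sub_mul, Matrix.one_mul]
        _ = B - Jmat m := by rw [hJB]
    have hmat : ((C + b • Jmat m)⁻¹ * B) * (C * Xu (k+1))
        = B * Xu (k+1) - Jmat m * Xu (k+1) := by
      rw [← Matrix.mul_assoc, hMB, Matrix.sub_mul]
    show γ * frInner (Yu (k+1) - Y) (((C + b • Jmat m)⁻¹ * B) * (Yu (k+1) - Yu k)) = a6 - a7
    rw [hYpYk, Matrix.mul_smul, frInner_smulr, hmat, frInner_subr,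
      frInner_Jmul_zero _ _ hPcolY, sub_zero, ← hXB (k+1)]
    have hXpP : X (k+1) = P + oneOuter m x := by rw [hP]; abel
    rw [hXpP, frInner_addr, frInner_oneOuter_zero _ _ hPcolY, add_zero, frInner_subl,
      ← ha6, ← ha7]
    field_simp
  have e4 : a4 - a2 + a5 = -(mnormSq (B - B * C - A * B) (Xu (k+1))) := by
    have h41 : (D * B - 1 + C) * Xu (k+1)
        = D * X (k+1) - Xu (k+1) + C * Xu (k+1) := by
      rw [Matrix.add_mul, Matrix.sub_mul, Matrix.one_mul, hXB (k+1), Matrix.mul_assoc]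
    have hMcol2 : ∀ j, ∑ i,
        (((D * B - 1 + C) * Xu (k+1) : Matrix (Fin m) (Fin d) ℝ)) i j = 0 := by
      intro j
      rw [colsum_mul]
      simp_rw [hMcol]
      simp
    have htr : (D * B - 1 + C)ᵀ = B * D - 1 + C := by
      rw [Matrix.transpose_add, Matrix.transpose_sub, Matrix.transpose_mul,
        Matrix.transpose_one, hBt, hDt, hCt]
    have hneg : (B * D - 1 + C) * B = -((B - B * C - A * B)) := by
      rw [hA]
      calc (B * D - 1 + C) * B = B * D * B - B + C * B := by noncomm_ring
        _ = B * D * B - B + B * C := by rw [hBC]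
        _ = -((B - B * C - (B * D) * B)) := by noncomm_ring
    have h42 : frInner ((D * B - 1 + C) * Xu (k+1)) P
        = -(mnormSq (B - B * C - A * B) (Xu (k+1))) := by
      rw [hP, frInner_subr, frInner_oneOuter_zero _ _ hMcol2, sub_zero, hXB (k+1),
        frInner_mull, htr, ← Matrix.mul_assoc, hneg, Matrix.neg_mul, frInner_negr]
      rfl
    rw [← h42, h41, frInner_addl, frInner_subl, ha4, ha2, ha5]
  have e5 : a6 = a3 + (1/γ) * a5 := by
    rw [ha6, hYu k, frInner_addl, frInner_smull, ha3, ha5]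
  have keyEq : frInner (gradMat gf (X k)) P + a7
      = -((1/γ) * mnormSq (B - B * C - A * B) (Xu (k+1)))
        - (1/γ) * minnerM D (X (k+1) - X k) P
        - γ * minnerM ((C + b • Jmat m)⁻¹ * B) (Yu (k+1) - Y) (Yu (k+1) - Yu k) := by
    have hinv : γ * (1/γ) = 1 := by field_simp
    linear_combination e1 + (1/γ) * e2 + e3 + (1/γ) * e4 + e5
  -- analytic step
  have hL0 : 0 ≤ L := by
    have h := hsmooth ⟨0, hm⟩ (EuclideanSpace.single (⟨0, hd⟩ : Fin d) (1:ℝ)) 0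
    have h2 : ‖(EuclideanSpace.single (⟨0, hd⟩ : Fin d) (1:ℝ)) - 0‖ = 1 := by
      rw [sub_zero, EuclideanSpace.norm_single, norm_one]
    rw [h2, mul_one] at h
    exact le_trans (norm_nonneg _) h
  have rowIneq : ∀ i : Fin m, f i (toVec (X (k+1) i))
      ≤ f i (toVec (oneOuter m x i))
        + (inner ℝ (toVec (gradMat gf (X k) i)) (toVec (X (k+1) i) - toVec (oneOuter m x i)) : ℝ)
        + L/2 * ‖toVec (X (k+1) i) - toVec (X k i)‖^2 := by
    intro i
    have hd1 := descent_lemma (f i) (gf i) (hgrad i) L hL0 (hsmooth i)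
      (toVec (X k i)) (toVec (X (k+1) i))
    have hc1 := convex_grad_ineq (f i) (gf i) (hgrad i) (hconv i)
      (toVec (X k i)) (toVec (oneOuter m x i))
    have hgm : toVec (gradMat gf (X k) i) = gf i (toVec (X k i)) := rfl
    rw [hgm]
    have hadd : (inner ℝ (gf i (toVec (X k i))) (toVec (X (k+1) i) - toVec (X k i)) : ℝ)
        - (inner ℝ (gf i (toVec (X k i))) (toVec (oneOuter m x i) - toVec (X k i)) : ℝ)
        = (inner ℝ (gf i (toVec (X k i))) (toVec (X (k+1) i) - toVec (oneOuter m x i)) : ℝ) := by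
      rw [inner_sub_right, inner_sub_right, inner_sub_right]
      ring
    linarith
  have hfr : frInner (gradMat gf (X k)) P
      = ∑ i, (inner ℝ (toVec (gradMat gf (X k) i))
          (toVec (X (k+1) i) - toVec (oneOuter m x i)) : ℝ) := by
    rw [frInner_rows]
    exact Finset.sum_congr rfl fun i _ => rfl
  have hfro : froSq (X (k+1) - X k) = ∑ i, ‖toVec (X (k+1) i) - toVec (X k i)‖^2 := by
    rw [froSq, frInner_rows]
    refine Finset.sum_congr rfl fun i _ => ?_
    exact real_inner_self_eq_norm_sq _
  have stepA : fMat f (X (k+1)) ≤ fMat f (oneOuter m x) + frInner (gradMat gf (X k)) P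
      + L/2 * froSq (X (k+1) - X k) := by
    have hsum := Finset.sum_le_sum (fun i (_ : i ∈ Finset.univ) => rowIneq i)
    calc fMat f (X (k+1)) ≤ ∑ i, (f i (toVec (oneOuter m x i))
          + (inner ℝ (toVec (gradMat gf (X k) i))
              (toVec (X (k+1) i) - toVec (oneOuter m x i)) : ℝ)
          + L/2 * ‖toVec (X (k+1) i) - toVec (X k i)‖^2) := hsum
      _ = fMat f (oneOuter m x) + frInner (gradMat gf (X k)) P
          + L/2 * froSq (X (k+1) - X k) := by
          rw [Finset.sum_add_distrib, Finset.sum_add_distrib, hfr, hfro, Finset.mul_sum]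
          rfl
  have hYsplit : frInner Y (X (k+1)) = frInner Y (oneOuter m x) + a7 := by
    have h := frInner_subr Y (X (k+1)) (oneOuter m x)
    rw [← hP, ← ha7] at h
    linarith
  show fMat f (X (k+1)) + frInner Y (X (k+1)) ≤ fMat f (oneOuter m x) + frInner Y (oneOuter m x)
    - (1 / γ) * mnormSq (B - B * C - A * B) (Xu (k + 1))
    - (1 / γ) * minnerM D (X (k + 1) - X k) P
    - γ * minnerM ((C + b • Jmat m)⁻¹ * B) (Yu (k + 1) - Y) (Yu (k + 1) - Yu k)
    + (L / 2) * froSq (X (k + 1) - X k)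
  linarith [stepA, keyEq, hYsplit]
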